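/- arXiv:2307.06076 — 3 statements merged into one kernel-verified Lean document; each statement's English description precedes it below -/
import Mathlib

section
/- Let V_e(k) = (1/2)·e(k)² where e(k+1) = (1 − b·γ)·e(k) + r(k) with |r(k)| ≤ H·ε·(‖x(k)‖ + |e(k)|) and 0 < b·γ < 1. Then there exist λ_u > 0 and H' ≥ 0 (independent of ε) such that V_e(k+1) − V_e(k) ≤ −λ_u·e(k)² + H'·ε²·‖x(k)‖² + H'·ε²·e(k)², provided ε and γ are chosen small enough. -/
lemma key (b γ H ε E X R : ℝ) (hbγ : 0 < b*γ) (hbγ1 : b*γ < 1) (hH : 0 < H)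
    (hε : 0 < ε) (hε0 : ε ≤ b*γ/(8*H)) (hX : 0 ≤ X)
    (hR : |R| ≤ H*ε*(X+|E|)) :
    (1/2)*((1-b*γ)*E + R)^2 - (1/2)*E^2 ≤
      -(b*γ/4)*E^2 + (H^2 + 2*H^2/(b*γ))*ε^2*X^2 + (H^2 + 2*H^2/(b*γ))*ε^2*E^2 := by
  have hRa : 0 ≤ |R| := abs_nonneg R
  have hEa : 0 ≤ |E| := abs_nonneg E
  have hR2 : R^2 ≤ (H*ε*(X+|E|))^2 := by
    rw [← sq_abs R]; exact pow_le_pow_left₀ hRa hR 2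
  have hE2 : |E|^2 = E^2 := sq_abs E
  have hHε : H * ε ≤ b*γ/8 := by
    have h1 := mul_le_mul_of_nonneg_left hε0 hH.le
    calc H * ε ≤ H * (b*γ/(8*H)) := h1
    _ = b*γ/8 := by field_simp
  have hER1 : (1-b*γ)*(E*R) ≤ |E| * (H*ε*(X+|E|)) := by
    have h1 : E * R ≤ |E| * |R| := (le_abs_self _).trans (abs_mul E R).le
    have h2 : -(E * R) ≤ |E| * |R| := by
      calc -(E*R) ≤ |E*R| := neg_le_abs _
      _ = |E| * |R| := abs_mul E R
    have h3 : |E| * |R| ≤ |E| * (H*ε*(X+|E|)) := mul_le_mul_of_nonneg_left hR hEa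
    nlinarith [mul_nonneg hEa hRa]
  have hd : 0 ≤ 2*H^2/(b*γ) := by positivity
  have hcx : (2*H^2/(b*γ))*(b*γ)*(ε^2*X^2) = 2*H^2*(ε^2*X^2) := by
    field_simp
    exact mul_div_cancel_left₀ _ hbγ.ne'
  apply le_of_mul_le_mul_left _ hbγ
  have hyoung : 0 ≤ (b*γ*|E| - 4*H*ε*X)^2 := sq_nonneg _
  have heq2 : (b*γ)^2*|E|^2 = (b*γ)^2*E^2 := by rw [hE2]
  have hE2m : b*γ*((H*ε)^2*|E|^2) = b*γ*((H*ε)^2*E^2) := by rw [hE2]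
  have h1 := mul_le_mul_of_nonneg_left hER1 hbγ.le
  have h2 := mul_le_mul_of_nonneg_left hR2 hbγ.le
  have h3 : 0 ≤ b*γ*((b*γ/8 - H*ε) * E^2) :=
    mul_nonneg hbγ.le (mul_nonneg (by linarith) (sq_nonneg E))
  have h4 : 0 ≤ b*γ*((H*ε)^2*(X - |E|)^2) :=
    mul_nonneg hbγ.le (mul_nonneg (sq_nonneg _) (sq_nonneg _))
  have h7 : 0 ≤ b*γ*(2*H^2/(b*γ))*(ε^2*E^2) :=
    mul_nonneg (mul_nonneg hbγ.le hd) (mul_nonneg (sq_nonneg ε) (sq_nonneg E))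
  have h8 : 0 ≤ (b*γ)^2*((1-b*γ)*E^2) :=
    mul_nonneg (sq_nonneg _) (mul_nonneg (by linarith) (sq_nonneg E))
  nlinarith [h1, h2, h3, h4, h7, h8, hyoung, heq2, hE2m, hcx,
    mul_nonneg (mul_nonneg hbγ.le (mul_nonneg (mul_nonneg hH.le hε.le) hX)) hEa]


theorem stmt_2 {n : ℕ} (b γ H : ℝ) (hb : 0 < b) (hγ : 0 < γ) (hH : 0 < H)
    (hbγ : 0 < b * γ) (hbγ1 : b * γ < 1) :
    ∃ lamu > (0 : ℝ), ∃ H' ≥ (0 : ℝ), ∃ ε₀ > (0 : ℝ), ∀ ε : ℝ, 0 < ε → ε ≤ ε₀ →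
      ∀ (e : ℕ → ℝ) (x : ℕ → EuclideanSpace ℝ (Fin n)) (r : ℕ → ℝ),
        (∀ k, e (k + 1) = (1 - b * γ) * e k + r k) →
        (∀ k, |r k| ≤ H * ε * (‖x k‖ + |e k|)) →
        ∀ k, (1 / 2) * (e (k + 1)) ^ 2 - (1 / 2) * (e k) ^ 2 ≤
          -lamu * (e k) ^ 2 + H' * ε ^ 2 * ‖x k‖ ^ 2 + H' * ε ^ 2 * (e k) ^ 2 := by
  refine ⟨b*γ/4, by positivity, H^2 + 2*H^2/(b*γ), by positivity, b*γ/(8*H), by positivity,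
    fun ε hε hε0 e x r he hr k => ?_⟩
  have := key b γ H ε (e k) (‖x k‖) (r k) hbγ hbγ1 hH hε hε0 (norm_nonneg _) (hr k)
  rw [he k]
  linarith
end

section
/- Let A(ε) = I + ε·α·A_cl + ε²·R(ε) where A_cl is Hurwitz with Lyapunov pair (P, Q), i.e., A_clᵀP + P·A_cl = −Q with P, Q symmetric positive definite, and ‖R(ε)‖ ≤ M for ε in (0, ε₀]. Then there exist λ > 0 and H ≥ 0 such that for all x, xᵀ·A(ε)ᵀ·P·A(ε)·x − xᵀ·P·x ≤ −λ·ε·‖x‖² + H·ε²·‖x‖². -/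
open Matrix

attribute [local instance] Matrix.frobeniusNormedAddCommGroup

attribute [local instance] Matrix.frobeniusNormedSpace

private lemma frob_sq' {n : ℕ} (S : Matrix (Fin n) (Fin n) ℝ) :
    ‖S‖ ^ 2 = ∑ i, ∑ j, (S i j) ^ 2 := by
  have h : ‖S‖ = Real.sqrt (∑ i, ∑ j, (S i j) ^ 2) := by
    rw [Matrix.frobenius_norm_def, Real.sqrt_eq_rpow]
    congr 1
    refine Finset.sum_congr rfl fun i _ => Finset.sum_congr rfl fun j _ => ?_
    rw [show (2:ℝ) = ((2:ℕ):ℝ) by norm_num, Real.rpow_natCast, Real.norm_eq_abs, sq_abs]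
  rw [h, Real.sq_sqrt]
  positivity

private lemma quadform_le' {n : ℕ} (S : Matrix (Fin n) (Fin n) ℝ) (x : Fin n → ℝ) :
    x ⬝ᵥ S *ᵥ x ≤ ‖S‖ * ∑ i, x i ^ 2 := by
  have h1 : x ⬝ᵥ S *ᵥ x = ∑ p ∈ Finset.univ ×ˢ Finset.univ,
      S p.1 p.2 * (x p.1 * x p.2) := by
    rw [Finset.sum_product]
    simp [dotProduct, Matrix.mulVec, Finset.mul_sum]
    exact Finset.sum_congr rfl fun i _ => Finset.sum_congr rfl fun j _ => by ring
  have h2 := Finset.sum_mul_sq_le_sq_mul_sq (Finset.univ ×ˢ Finset.univ)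
      (fun p : Fin n × Fin n => S p.1 p.2) (fun p => x p.1 * x p.2)
  have h3 : ∑ p ∈ Finset.univ ×ˢ Finset.univ, (S p.1 p.2) ^ 2 = ‖S‖ ^ 2 := by
    rw [frob_sq', Finset.sum_product]
  have h4 : ∑ p ∈ Finset.univ ×ˢ Finset.univ, (x p.1 * x p.2) ^ 2
      = (∑ i, x i ^ 2) ^ 2 := by
    rw [Finset.sum_product, sq (∑ i, x i ^ 2), Finset.sum_mul_sum]
    simp [mul_pow]
  rw [h3, h4] at h2
  have hrhs : 0 ≤ ‖S‖ * ∑ i, x i ^ 2 := by positivity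
  apply le_of_sq_le_sq _ hrhs
  rw [h1, mul_pow]; exact h2

private lemma coercive' {n : ℕ} {Q : Matrix (Fin n) (Fin n) ℝ} (hQ : Q.PosDef) :
    ∃ c > (0:ℝ), ∀ x : EuclideanSpace ℝ (Fin n), c * ‖x‖ ^ 2 ≤ (x : Fin n → ℝ) ⬝ᵥ Q *ᵥ x := by
  have hpos : ∀ y : Fin n → ℝ, y ≠ 0 → 0 < y ⬝ᵥ Q *ᵥ y := by
    intro y hy
    have := hQ.re_dotProduct_pos hy
    simpa using this
  rcases Nat.eq_zero_or_pos n with h0 | hn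
  · refine ⟨1, one_pos, fun x => ?_⟩
    subst h0
    have hx : x = 0 := Subsingleton.elim _ _
    simp [hx, dotProduct]
  · have hf : Continuous (fun x : EuclideanSpace ℝ (Fin n) => (x : Fin n → ℝ) ⬝ᵥ Q *ᵥ x) := by
      simp only [dotProduct, Matrix.mulVec]
      fun_prop
    haveI : Nonempty (Fin n) := ⟨⟨0, hn⟩⟩
    obtain ⟨u, hu⟩ := exists_norm_eq (EuclideanSpace ℝ (Fin n)) (zero_le_one' ℝ)
    obtain ⟨x₀, hx₀S, hmin⟩ := (isCompact_sphere (0 : EuclideanSpace ℝ (Fin n)) 1).exists_isMinOn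
      ⟨u, by simpa using hu⟩ hf.continuousOn
    have hx₀ : ‖x₀‖ = 1 := by simpa using hx₀S
    have hx₀ne : x₀ ≠ 0 := by intro h; rw [h] at hx₀; simp at hx₀
    refine ⟨(x₀ : Fin n → ℝ) ⬝ᵥ Q *ᵥ x₀, hpos _ (fun h => hx₀ne (WithLp.ofLp_injective 2 (by rw [h]; rfl))), fun x => ?_⟩
    rcases eq_or_ne x 0 with rfl | hx
    · simp [dotProduct]
    · set v := ‖x‖⁻¹ • x with hv
      have hvnorm : ‖v‖ = 1 := norm_smul_inv_norm hx
      have hle := hmin (by simpa using hvnorm : v ∈ Metric.sphere (0 : EuclideanSpace ℝ (Fin n)) 1)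
      have hxpos : (0:ℝ) < ‖x‖ := norm_pos_iff.mpr hx
      have hval : (v : Fin n → ℝ) ⬝ᵥ Q *ᵥ v = ‖x‖⁻¹ * (‖x‖⁻¹ * ((x : Fin n → ℝ) ⬝ᵥ Q *ᵥ x)) := by
        show (‖x‖⁻¹ • (x : Fin n → ℝ)) ⬝ᵥ Q *ᵥ (‖x‖⁻¹ • (x : Fin n → ℝ)) = _
        rw [smul_dotProduct, Matrix.mulVec_smul, dotProduct_smul]
        simp [smul_eq_mul]
      have hthis : (x₀ : Fin n → ℝ) ⬝ᵥ Q *ᵥ x₀ ≤ ‖x‖⁻¹ * (‖x‖⁻¹ * ((x : Fin n → ℝ) ⬝ᵥ Q *ᵥ x)) := by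
        have := hle
        simp only [Set.mem_setOf_eq] at this
        rwa [hval] at this
      calc ((x₀ : Fin n → ℝ) ⬝ᵥ Q *ᵥ x₀) * ‖x‖ ^ 2
          ≤ (‖x‖⁻¹ * (‖x‖⁻¹ * ((x : Fin n → ℝ) ⬝ᵥ Q *ᵥ x))) * ‖x‖ ^ 2 :=
            mul_le_mul_of_nonneg_right hthis (by positivity)
      _ = (‖x‖⁻¹ * ‖x‖) ^ 2 * ((x : Fin n → ℝ) ⬝ᵥ Q *ᵥ x) := by ring
      _ = (x : Fin n → ℝ) ⬝ᵥ Q *ᵥ x := by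
            rw [inv_mul_cancel₀ (ne_of_gt hxpos)]; ring

private lemma expandA' {n : ℕ} (Acl P Rm : Matrix (Fin n) (Fin n) ℝ) (ε α : ℝ) :
    ((1 : Matrix (Fin n) (Fin n) ℝ) + (ε * α) • Acl + ε ^ 2 • Rm)ᵀ * P *
      ((1 : Matrix (Fin n) (Fin n) ℝ) + (ε * α) • Acl + ε ^ 2 • Rm)
    = P + (ε * α) • (Aclᵀ * P + P * Acl) +
      ε ^ 2 • (Rmᵀ * P + P * Rm + (α • Acl + ε • Rm)ᵀ * P * (α • Acl + ε • Rm)) := by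
  simp only [transpose_add, transpose_smul, transpose_one, Matrix.add_mul, Matrix.mul_add,
    Matrix.smul_mul, Matrix.mul_smul, smul_add, smul_smul, Matrix.one_mul, Matrix.mul_one]
  module

private lemma euclid_norm_sq {n : ℕ} (x : EuclideanSpace ℝ (Fin n)) :
    ‖x‖ ^ 2 = ∑ i, x i ^ 2 := by
  rw [EuclideanSpace.norm_eq, Real.sq_sqrt (by positivity)]
  simp [Real.norm_eq_abs, sq_abs]

theorem stmt_6 {n : ℕ}
    (Acl P Q : Matrix (Fin n) (Fin n) ℝ) (R : ℝ → Matrix (Fin n) (Fin n) ℝ)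
    (α ε₀ M : ℝ) (hα : 0 < α) (hα1 : α ≤ 1) (hε₀ : 0 < ε₀) (hM : 0 ≤ M)
    (hP : P.IsSymm) (hPpos : P.PosDef) (hQ : Q.IsSymm) (hQpos : Q.PosDef)
    (hLyap : Aclᵀ * P + P * Acl = -Q)
    (hR : ∀ ε ∈ Set.Ioc (0 : ℝ) ε₀, ‖R ε‖ ≤ M) :
    ∃ lam > (0 : ℝ), ∃ H ≥ (0 : ℝ), ∀ ε ∈ Set.Ioc (0 : ℝ) ε₀,
      ∀ x : EuclideanSpace ℝ (Fin n),
        let A := (1 : Matrix (Fin n) (Fin n) ℝ) + (ε * α) • Acl + ε ^ 2 • R ε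
        x ⬝ᵥ ((Aᵀ * P * A).mulVec x) - x ⬝ᵥ (P.mulVec x) ≤
          -lam * ε * ‖x‖ ^ 2 + H * ε ^ 2 * ‖x‖ ^ 2 := by
  obtain ⟨c, hc, hcoer⟩ := coercive' hQpos
  set K : ℝ := ‖Acl‖ + ε₀ * M with hK
  set H : ℝ := 2 * M * ‖P‖ + K ^ 2 * ‖P‖ with hH
  have hK0 : 0 ≤ K := by positivity
  have hH0 : 0 ≤ H := by positivity
  refine ⟨α * c, mul_pos hα hc, H, hH0, fun ε hε x => ?_⟩
  obtain ⟨hε1, hε2⟩ := hε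
  intro A
  set S : Matrix (Fin n) (Fin n) ℝ :=
    (R ε)ᵀ * P + P * (R ε) + (α • Acl + ε • R ε)ᵀ * P * (α • Acl + ε • R ε) with hS
  -- norm bound on S
  have hRε : ‖R ε‖ ≤ M := hR ε ⟨hε1, hε2⟩
  have hCnorm : ‖α • Acl + ε • R ε‖ ≤ K := by
    calc ‖α • Acl + ε • R ε‖ ≤ ‖α • Acl‖ + ‖ε • R ε‖ := norm_add_le _ _
    _ = |α| * ‖Acl‖ + |ε| * ‖R ε‖ := by rw [norm_smul, norm_smul, Real.norm_eq_abs,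
        Real.norm_eq_abs]
    _ ≤ 1 * ‖Acl‖ + ε₀ * M := by
        apply add_le_add
        · exact mul_le_mul (by rw [abs_of_pos hα]; exact hα1) le_rfl (norm_nonneg _)
            zero_le_one
        · exact mul_le_mul (by rw [abs_of_pos hε1]; exact hε2) hRε (norm_nonneg _)
            (le_of_lt hε₀)
    _ = K := by rw [one_mul]
  have hSnorm : ‖S‖ ≤ H := by
    calc ‖S‖ ≤ ‖(R ε)ᵀ * P + P * (R ε)‖ + ‖(α • Acl + ε • R ε)ᵀ * P * (α • Acl + ε • R ε)‖ :=
        norm_add_le _ _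
    _ ≤ (‖(R ε)ᵀ * P‖ + ‖P * (R ε)‖) + ‖(α • Acl + ε • R ε)ᵀ * P‖ * ‖α • Acl + ε • R ε‖ := by
        apply add_le_add (norm_add_le _ _) (Matrix.frobenius_norm_mul _ _)
    _ ≤ (‖(R ε)ᵀ‖ * ‖P‖ + ‖P‖ * ‖R ε‖) + ‖(α • Acl + ε • R ε)ᵀ‖ * ‖P‖ * ‖α • Acl + ε • R ε‖ := by
        apply add_le_add (add_le_add (Matrix.frobenius_norm_mul _ _)
          (Matrix.frobenius_norm_mul _ _))
        apply mul_le_mul_of_nonneg_right (Matrix.frobenius_norm_mul _ _) (norm_nonneg _)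
    _ ≤ (M * ‖P‖ + ‖P‖ * M) + K * ‖P‖ * K := by
        rw [Matrix.frobenius_norm_transpose, Matrix.frobenius_norm_transpose]
        apply add_le_add
        · exact add_le_add (mul_le_mul_of_nonneg_right hRε (norm_nonneg _))
            (mul_le_mul_of_nonneg_left hRε (norm_nonneg _))
        · exact mul_le_mul (mul_le_mul_of_nonneg_right hCnorm (norm_nonneg _)) hCnorm
            (norm_nonneg _) (by positivity)
    _ = H := by rw [hH]; ring
  -- expand the quadratic form
  have hAexp : Aᵀ * P * A = P + (ε * α) • (Aclᵀ * P + P * Acl) + ε ^ 2 • S :=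
    expandA' Acl P (R ε) ε α
  have hquad : x ⬝ᵥ ((Aᵀ * P * A).mulVec x) - x ⬝ᵥ (P.mulVec x)
      = -(ε * α) * ((x : Fin n → ℝ) ⬝ᵥ Q *ᵥ x) + ε ^ 2 * ((x : Fin n → ℝ) ⬝ᵥ S *ᵥ x) := by
    rw [hAexp, hLyap]
    rw [Matrix.add_mulVec, Matrix.add_mulVec, dotProduct_add, dotProduct_add,
      Matrix.smul_mulVec, Matrix.smul_mulVec, dotProduct_smul, dotProduct_smul,
      Matrix.neg_mulVec, dotProduct_neg]
    simp only [smul_eq_mul]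
    ring
  rw [hquad]
  have hb1 : -(ε * α) * ((x : Fin n → ℝ) ⬝ᵥ Q *ᵥ x) ≤ -(α * c) * ε * ‖x‖ ^ 2 := by
    have h := hcoer x
    nlinarith [mul_le_mul_of_nonneg_left h (le_of_lt (mul_pos hε1 hα))]
  have hb2 : ε ^ 2 * ((x : Fin n → ℝ) ⬝ᵥ S *ᵥ x) ≤ H * ε ^ 2 * ‖x‖ ^ 2 := by
    have h := quadform_le' S x
    rw [← euclid_norm_sq] at h
    have hS2 : (x : Fin n → ℝ) ⬝ᵥ S *ᵥ x ≤ H * ‖x‖ ^ 2 :=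
      h.trans (mul_le_mul_of_nonneg_right hSnorm (by positivity))
    nlinarith [sq_nonneg ε]
  calc -(ε * α) * ((x : Fin n → ℝ) ⬝ᵥ Q *ᵥ x) + ε ^ 2 * ((x : Fin n → ℝ) ⬝ᵥ S *ᵥ x)
      ≤ -(α * c) * ε * ‖x‖ ^ 2 + H * ε ^ 2 * ‖x‖ ^ 2 := add_le_add hb1 hb2
end

section
/- Let A₀ be a Hurwitz matrix and let η : ℝ≥0 → ℝⁿ solve ε·η̇ = A₀η with ε > 0. Then for the solution with initial scaled coordinates η_i(0) = (x_i(0) − x̂_i(0))/ε^{ρ−i}, the unscaled error x₁(t) − x̂₁(t) can peak: there exist initial conditions with ‖x(0) − x̂(0)‖ = 1 such that sup over components i of |x_i(t) − x̂_i(t)| is at least c/ε^{ρ−1} for some time t and constant c > 0 independent of ε, as ε → 0. -/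
open Matrix NormedSpace Set

private lemma peaking_hasDerivAt_exp_entry {n : ℕ} (A : Matrix (Fin n) (Fin n) ℝ)
    (i j : Fin n) (s : ℝ) :
    HasDerivAt (fun t : ℝ => exp (t • A) i j) ((A * exp (s • A)) i j) s := by
  letI : NormedRing (Matrix (Fin n) (Fin n) ℝ) := Matrix.linftyOpNormedRing
  letI : NormedAlgebra ℝ (Matrix (Fin n) (Fin n) ℝ) := Matrix.linftyOpNormedAlgebra
  have h := hasDerivAt_exp_smul_const' (𝕂 := ℝ) A s
  let L : Matrix (Fin n) (Fin n) ℝ →ₗ[ℝ] ℝ :=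
    { toFun := fun M => M i j, map_add' := fun _ _ => rfl, map_smul' := fun _ _ => rfl }
  have hL := (LinearMap.toContinuousLinearMap L).hasFDerivAt (x := exp (s • A))
  exact hL.comp_hasDerivAt s h

theorem stmt_15 (ρ : ℕ) (hρ : 2 ≤ ρ) (a : Fin ρ → ℝ)
    (A₀ : Matrix (Fin ρ) (Fin ρ) ℝ)
    (hA₀ : ∀ i j, A₀ i j =
      (if (j : ℕ) = (i : ℕ) + 1 then 1 else 0) + (if (j : ℕ) = 0 then -(a i) else 0))
    (hHurwitz : ∀ μ ∈ spectrum ℂ (A₀.map (algebraMap ℝ ℂ)), μ.re < 0) :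
    ∃ c > (0 : ℝ), ∃ ε₀ > (0 : ℝ), ∀ ε : ℝ, 0 < ε → ε < ε₀ →
      ∃ e : ℝ → Fin ρ → ℝ,
        -- unscaled observer-error dynamics ė_i = e_{i+1} - (a_i / ε^{i+1}) e_1
        (∀ t, HasDerivAt e
          ((Matrix.of fun i j : Fin ρ =>
            (if (j : ℕ) = (i : ℕ) + 1 then (1 : ℝ) else 0)
              + (if (j : ℕ) = 0 then -(a i / ε ^ ((i : ℕ) + 1)) else 0)).mulVec (e t)) t) ∧
        ‖(WithLp.equiv 2 (Fin ρ → ℝ)).symm (e 0)‖ = 1 ∧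
        ∃ t ≥ (0 : ℝ), ∃ i : Fin ρ, c / ε ^ (ρ - 1) ≤ |e t i| := by
  haveI : NeZero ρ := ⟨by omega⟩
  have hρ1 : ρ - 1 < ρ := by omega
  set r : Fin ρ := ⟨ρ - 1, hρ1⟩ with hr
  set E : ℝ → Matrix (Fin ρ) (Fin ρ) ℝ := fun s => exp (s • A₀) with hEdef
  have hE0 : E 0 = 1 := by
    simp only [hEdef, zero_smul]
    exact exp_zero
  have hEntry : ∀ (i j : Fin ρ) (s : ℝ),
      HasDerivAt (fun t => E t i j) ((A₀ * E s) i j) s :=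
    fun i j s => peaking_hasDerivAt_exp_entry A₀ i j s
  have hr0 : r ≠ 0 := by
    intro h
    have := congrArg (Fin.val) h
    simp [hr] at this
    omega
  -- find a time s₀ > 0 where the (r,0) entry of the flow is nonzero
  obtain ⟨s₀, hs₀, hfs₀⟩ : ∃ s > (0:ℝ), E s r 0 ≠ 0 := by
    by_contra h
    push_neg at h
    -- first: a r ≠ 0
    have har : a r ≠ 0 := by
      intro ha0
      have hrow : ∀ j : Fin ρ, A₀ r j = 0 := by
        intro j
        rw [hA₀]
        have hj : (j : ℕ) ≠ (r : ℕ) + 1 := by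
          have := j.isLt; simp only [hr]; omega
        simp [hj, ha0]
      have hdet : (A₀.map (algebraMap ℝ ℂ)).det = 0 :=
        Matrix.det_eq_zero_of_row_eq_zero r (fun j => by
          simp [Matrix.map_apply, hrow j])
      have h0 : (0:ℂ) ∈ spectrum ℂ (A₀.map (algebraMap ℝ ℂ)) := by
        rw [spectrum.zero_mem_iff]
        intro hu
        rw [Matrix.isUnit_iff_isUnit_det, hdet] at hu
        exact not_isUnit_zero hu
      have := hHurwitz 0 h0
      simp at this
    -- derivative of s ↦ E s r 0 at 0 is -(a r)
    have hf : HasDerivAt (fun s => E s r 0) (-(a r)) 0 := by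
      have h1 := hEntry r 0 0
      rw [hE0, mul_one] at h1
      have h2 : A₀ r 0 = -(a r) := by
        rw [hA₀]
        have : ((0 : Fin ρ) : ℕ) ≠ (r : ℕ) + 1 := by simp
        simp [this]
      rwa [h2] at h1
    have hf0 : E 0 r 0 = 0 := by
      rw [hE0]
      exact Matrix.one_apply_ne hr0
    have h1 : HasDerivWithinAt (fun s => E s r 0) (-(a r)) (Ici 0) 0 :=
      hf.hasDerivWithinAt
    have h2 : HasDerivWithinAt (fun s => E s r 0) 0 (Ici 0) 0 := by
      have hzero : ∀ s ∈ Ici (0:ℝ), E s r 0 = 0 := by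
        intro s hs
        rcases eq_or_lt_of_le (Set.mem_Ici.mp hs) with h' | h'
        · rw [← h']; exact hf0
        · exact h s h'
      exact (hasDerivWithinAt_const 0 (Ici 0) 0).congr hzero hf0
    have hu := uniqueDiffOn_Ici (0:ℝ) 0 self_mem_Ici
    have := (h1.derivWithin hu).symm.trans (h2.derivWithin hu)
    simp at this
    exact har this
  refine ⟨|E s₀ r 0|, abs_pos.mpr hfs₀, 1, one_pos, fun ε hε hε1 => ?_⟩
  have hεne : ε ≠ 0 := ne_of_gt hε
  refine ⟨fun t i => (ε ^ (i : ℕ))⁻¹ * E (t / ε) i 0, ?_, ?_, ?_⟩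
  · -- the ODE
    intro t
    rw [hasDerivAt_pi]
    intro i
    have hc : HasDerivAt (fun t => (ε ^ (i : ℕ))⁻¹ * E (t / ε) i 0)
        ((ε ^ (i : ℕ))⁻¹ * ((A₀ * E (t / ε)) i 0 * (1 / ε))) t := by
      have hin : HasDerivAt (fun t : ℝ => t / ε) (1 / ε) t :=
        (hasDerivAt_id t).div_const ε
      exact ((hEntry i 0 (t / ε)).comp t hin).const_mul _
    refine hc.congr_deriv ?_
    symm
    rw [Matrix.mulVec_apply_eq_sum, Matrix.mul_apply, Finset.sum_mul,
      Finset.mul_sum]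
    refine Finset.sum_congr rfl fun j _ => ?_
    rw [hA₀]
    simp only [Matrix.of_apply]
    by_cases hj1 : (j : ℕ) = (i : ℕ) + 1
    · have hj0 : (j : ℕ) ≠ 0 := by omega
      simp only [hj1, if_true, hj0, if_false, add_zero, one_mul, Nat.succ_ne_zero]
      rw [pow_succ, mul_inv]
      ring
    · by_cases hj0 : (j : ℕ) = 0
      · simp only [hj1, if_false, hj0, if_true, zero_add, pow_zero, inv_one, one_mul]
        rw [pow_succ]
        field_simp
        rw [if_neg (by omega)]
        ring
      · simp [hj1, hj0]
  · -- the norm of the initial condition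
    have he0 : (fun i : Fin ρ => (ε ^ (i : ℕ))⁻¹ * E (0 / ε) i 0) = Pi.single 0 1 := by
      funext i
      rw [zero_div, hE0]
      rcases eq_or_ne i 0 with h | h
      · subst h; simp [Matrix.one_apply]
      · simp [Matrix.one_apply_ne h, Pi.single_apply, h]
    show ‖(WithLp.equiv 2 (Fin ρ → ℝ)).symm
      (fun i : Fin ρ => (ε ^ (i : ℕ))⁻¹ * E (0 / ε) i 0)‖ = 1
    rw [he0]
    have : (WithLp.equiv 2 (Fin ρ → ℝ)).symm (Pi.single 0 1) =
        EuclideanSpace.single (0 : Fin ρ) (1 : ℝ) := rfl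
    rw [this, EuclideanSpace.norm_single, norm_one]
  · -- peaking
    refine ⟨ε * s₀, le_of_lt (mul_pos hε hs₀), r, ?_⟩
    have ht : ε * s₀ / ε = s₀ := by field_simp
    show |E s₀ r 0| / ε ^ (ρ - 1) ≤ |(ε ^ (r : ℕ))⁻¹ * E (ε * s₀ / ε) r 0|
    rw [ht, abs_mul, abs_inv, abs_pow, abs_of_pos hε]
    have hrv : (r : ℕ) = ρ - 1 := rfl
    rw [hrv, div_eq_mul_inv, mul_comm]
end
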